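/- Suppose p ∈ Σ is not a vertex and q, q' ∈ Σ satisfy q' = M_p q, q = M_p q', and q + q' = 2q_[p] with q ≠ q'. Then p lies on the boundary ∂Σ (one coordinate zero, not a vertex), and q - q_[p] = β·e₋₁(p) for some real β ≠ 0, where e₋₁(p) is the eigenvector of M_p with eigenvalue -1. -/

import Mathlib

open Matrix

noncomputable def Mp (p : Fin 3 → ℝ) : Matrix (Fin 3) (Fin 3) ℝ :=
  !![0, p 2 / (p 0 + p 2), p 1 / (p 0 + p 1);
     p 2 / (p 1 + p 2), 0, p 0 / (p 0 + p 1);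
     p 1 / (p 1 + p 2), p 0 / (p 0 + p 2), 0]

def inSimplex (v : Fin 3 → ℝ) : Prop := (∀ i, 0 ≤ v i) ∧ v 0 + v 1 + v 2 = 1

/-- The eigenvector `e₋₁(p)` of `M_p` with eigenvalue `-1`, for boundary points `p`
(the formula depends on which coordinate of `p` vanishes). -/
noncomputable def eNeg (p : Fin 3 → ℝ) : Fin 3 → ℝ :=
  if p 2 = 0 then ![p 1 / 2, p 0 / 2, -(1 / 2)]
  else if p 1 = 0 then ![p 2 / 2, -(1 / 2), p 0 / 2]
  else ![-(1 / 2), p 2 / 2, p 1 / 2]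

/-!
`q_[p]` is a fixed point of `M_p`, so `d = q - q_[p]` lies in `L`, satisfies `M_p d = -d`, and is
nonzero because `q ≠ q'`. Once denominators are cleared, the eigen-equation on `L` reads
`p_i · ℓ_i(d) = 0` for three linear forms `ℓ_i` whose only common zero in `L` is `0`. Hence some
`p_k` vanishes, and the two remaining equations put `d` on the line spanned by `e₋₁(p)`.
-/

noncomputable def qp (p : Fin 3 → ℝ) : Fin 3 → ℝ := fun i => (1 - p i) / 2

theorem funext_fin_three {α : Type*} {u v : Fin 3 → α} (h0 : u 0 = v 0) (h1 : u 1 = v 1)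
    (h2 : u 2 = v 2) : u = v := by
  ext i
  fin_cases i <;> assumption

lemma Mp_mulVec (p v : Fin 3 → ℝ) :
    Mp p *ᵥ v = ![p 2 / (p 0 + p 2) * v 1 + p 1 / (p 0 + p 1) * v 2,
                  p 2 / (p 1 + p 2) * v 0 + p 0 / (p 0 + p 1) * v 2,
                  p 1 / (p 1 + p 2) * v 0 + p 0 / (p 0 + p 2) * v 1] := by
  ext i
  fin_cases i <;> simp [Mp, mulVec, dotProduct, Fin.sum_univ_three]

section
variable {p d : Fin 3 → ℝ}

lemma pairwise_add_ne_zero (hs : p 0 + p 1 + p 2 = 1) (hpV : ∀ i, p i ≠ 1) :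
    p 0 + p 1 ≠ 0 ∧ p 0 + p 2 ≠ 0 ∧ p 1 + p 2 ≠ 0 :=
  ⟨fun h => hpV 2 (by linarith), fun h => hpV 1 (by linarith), fun h => hpV 0 (by linarith)⟩

lemma Mp_mulVec_qp (hs : p 0 + p 1 + p 2 = 1) (hpV : ∀ i, p i ≠ 1) : Mp p *ᵥ qp p = qp p := by
  obtain ⟨hab, hac, hbc⟩ := pairwise_add_ne_zero hs hpV
  have hqp : qp p = ![(p 1 + p 2) / 2, (p 0 + p 2) / 2, (p 0 + p 1) / 2] := by
    refine funext_fin_three ?_ ?_ ?_ <;> simp only [qp, cons_val_zero, cons_val_one, cons_val_two, tail_cons, head_cons] <;> linarith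
  rw [hqp, Mp_mulVec]
  simp only [cons_val_zero, cons_val_one, cons_val_two, tail_cons, head_cons]
  refine vec3_eq ?_ ?_ ?_ <;> field_simp <;> ring

lemma mul_add_eq_zero_of_mulVec_eq_neg (hab : p 0 + p 1 ≠ 0) (hac : p 0 + p 2 ≠ 0)
    (hbc : p 1 + p 2 ≠ 0) (hd : d 0 + d 1 + d 2 = 0) (h : Mp p *ᵥ d = -d) :
    p 0 * ((p 0 + p 1) * d 1 + (p 0 + p 2) * d 2) = 0 ∧
    p 1 * ((p 0 + p 1) * d 0 + (p 1 + p 2) * d 2) = 0 ∧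
    p 2 * ((p 0 + p 2) * d 0 + (p 1 + p 2) * d 1) = 0 := by
  rw [Mp_mulVec] at h
  have e0 := congrFun h 0
  have e1 := congrFun h 1
  have e2 := congrFun h 2
  simp only [Pi.neg_apply, cons_val_zero, cons_val_one, cons_val_two, tail_cons, head_cons] at e0 e1 e2
  field_simp at e0 e1 e2
  refine ⟨?_, ?_, ?_⟩
  · linear_combination -e0 + (p 0 + p 1) * (p 0 + p 2) * hd
  · linear_combination -e1 + (p 0 + p 1) * (p 1 + p 2) * hd
  · linear_combination -e2 + (p 0 + p 2) * (p 1 + p 2) * hd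

lemma eq_zero_of_mulVec_eq_neg (hs : p 0 + p 1 + p 2 = 1) (hpV : ∀ i, p i ≠ 1)
    (ha : p 0 ≠ 0) (hb : p 1 ≠ 0) (hc : p 2 ≠ 0) (hd : d 0 + d 1 + d 2 = 0)
    (h : Mp p *ᵥ d = -d) : d = 0 := by
  obtain ⟨hab, hac, hbc⟩ := pairwise_add_ne_zero hs hpV
  obtain ⟨R0, R1, R2⟩ := mul_add_eq_zero_of_mulVec_eq_neg hab hac hbc hd h
  have F0 := (mul_eq_zero.mp R0).resolve_left ha
  have F1 := (mul_eq_zero.mp R1).resolve_left hb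
  have F2 := (mul_eq_zero.mp R2).resolve_left hc
  have h2 : d 2 = 0 := by
    have : (p 1 + p 2) * ((p 0 + p 2) * d 2) = 0 := by
      linear_combination ((p 0 + p 2) * F1 - (p 0 + p 1) * F2 + (p 1 + p 2) * F0) / 2
    simpa [hbc, hac] using this
  have h1 : d 1 = 0 := by simpa [h2, hab] using F0
  have h0 : d 0 = 0 := by simpa [h2, hab] using F1
  exact funext_fin_three h0 h1 h2

lemma exists_eq_smul_eNeg_of_mulVec_eq_neg (hs : p 0 + p 1 + p 2 = 1) (hpV : ∀ i, p i ≠ 1)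
    (hd : d 0 + d 1 + d 2 = 0) (h : Mp p *ᵥ d = -d) (hd0 : d ≠ 0) :
    (∃ i, p i = 0) ∧ ∃ β : ℝ, d = β • eNeg p := by
  obtain ⟨hab, hac, hbc⟩ := pairwise_add_ne_zero hs hpV
  obtain ⟨R0, R1, R2⟩ := mul_add_eq_zero_of_mulVec_eq_neg hab hac hbc hd h
  by_cases hc : p 2 = 0
  · have F0 := (mul_eq_zero.mp R0).resolve_left (by simpa [hc] using hac)
    have F1 := (mul_eq_zero.mp R1).resolve_left (by simpa [hc] using hbc)
    refine ⟨⟨2, hc⟩, -2 * d 2, funext_fin_three ?_ ?_ ?_⟩ <;>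
      simp only [eNeg, hc, ↓reduceIte, Pi.smul_apply, smul_eq_mul, cons_val_zero, cons_val_one, cons_val_two, tail_cons, head_cons] <;> grind
  by_cases hb : p 1 = 0
  · have F0 := (mul_eq_zero.mp R0).resolve_left (by simpa [hb] using hab)
    have F2 := (mul_eq_zero.mp R2).resolve_left hc
    refine ⟨⟨1, hb⟩, -2 * d 1, funext_fin_three ?_ ?_ ?_⟩ <;>
      simp only [eNeg, hb, hc, ↓reduceIte, Pi.smul_apply, smul_eq_mul, cons_val_zero, cons_val_one, cons_val_two, tail_cons, head_cons] <;> grind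
  by_cases ha : p 0 = 0
  · have F1 := (mul_eq_zero.mp R1).resolve_left hb
    have F2 := (mul_eq_zero.mp R2).resolve_left hc
    refine ⟨⟨0, ha⟩, -2 * d 0, funext_fin_three ?_ ?_ ?_⟩ <;>
      simp only [eNeg, hb, hc, ↓reduceIte, Pi.smul_apply, smul_eq_mul, cons_val_zero, cons_val_one, cons_val_two, tail_cons, head_cons] <;> grind
  exact absurd (eq_zero_of_mulVec_eq_neg hs hpV ha hb hc hd h) hd0

end

theorem stmt14 (p q q' : Fin 3 → ℝ)
    (hp : inSimplex p) (hpV : ∀ i, p i ≠ 1)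
    (hq : inSimplex q)
    (h1 : (Mp p).mulVec q = q')
    (h3 : ∀ i, q i + q' i = 2 * ((1 - p i) / 2)) (hne : q ≠ q') :
    (∃ i, p i = 0) ∧
    ∃ β : ℝ, β ≠ 0 ∧ ∀ i, q i - (1 - p i) / 2 = β * eNeg p i := by
  set d := q - qp p with hd_def
  have hq' : q' = qp p - d := by
    ext i
    simp only [hd_def, qp, Pi.sub_apply]
    linarith [h3 i]
  have hd_sum : d 0 + d 1 + d 2 = 0 := by
    simp only [hd_def, qp, Pi.sub_apply]
    linarith [hp.2, hq.2]
  have hd_eig : Mp p *ᵥ d = -d := by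
    rw [hd_def, mulVec_sub, h1, Mp_mulVec_qp hp.2 hpV, hq', ← hd_def]
    abel
  have hd0 : d ≠ 0 := by
    intro h0
    have hq_eq : q = qp p := sub_eq_zero.mp (hd_def ▸ h0)
    exact hne (by rw [hq', h0, sub_zero, hq_eq])
  obtain ⟨hbdry, β, hβ⟩ := exists_eq_smul_eNeg_of_mulVec_eq_neg hp.2 hpV hd_sum hd_eig hd0
  refine ⟨hbdry, β, ?_, fun i => congrFun hβ i⟩
  rintro rfl
  exact hd0 (by simpa using hβ)
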